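/- Let r ≥ 1, n ≥ 1, let λ_1,…,λ_{rn} be real numbers, and let X be an r×(rn) random matrix whose entries are independent standard complex Gaussian random variables, i.e., each entry equals g + i·h where g and h are independent real Gaussians with mean 0 and variance 1/2 (so E|X_{m,a}|² = 1), all entries independent. Then E[ |det M(λ,X)|² ] = Σ_{(A_1,…,A_r) ∈ 𝒫_{r,n}} ∏_{j=1}^r Δ(A_j)². -/

import Mathlib

/-
Expanding `det M(λ, X)` over permutations writes it as `∑ₚ cₚ Xᵖ`, with real coefficients `cₚ`
and monomials `Xᵖ` that take in column `a` the entry of `X` in row `p(a) mod r`. Independent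
entries with `E z = 0` and `E |z|² = 1` make monomials that use each variable at most once
orthonormal in `L²`, so `E |det M|²` is the sum, over all row assignments, of the squared sum of
the `cₚ` with that assignment. A row assignment is determined by its fibres `A ∈ 𝒫_{r,n}`, and
the sum of the `cₚ` over one of them is `det M(λ, 1_A)` for the `0/1` incidence matrix `1_A`: after
reordering rows by the blocks and columns by `(j / r, j mod r)` this matrix is block diagonal
with the Vandermonde matrices of `λ` on `A_1, …, A_r`, whence `det M(λ, 1_A)² = ∏ⱼ Δ(A_j)²`.
-/

open scoped BigOperators
open MeasureTheory ProbabilityTheory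

/-- `M(λ,X)` for a complex `r × rn` matrix `X`: the `(rn)×(rn)` complex matrix with
`(i,j)` entry `λ_i^{⌊(j−1)/r⌋} · X_{j − r⌊(j−1)/r⌋, i}` (written 0-based). -/
def MagicMC (r n : ℕ) (hr : 0 < r) (lam : Fin (r * n) → ℝ)
    (X : Matrix (Fin r) (Fin (r * n)) ℂ) : Matrix (Fin (r * n)) (Fin (r * n)) ℂ :=
  Matrix.of fun i j => (lam i : ℂ) ^ (j.val / r) * X ⟨j.val % r, Nat.mod_lt _ hr⟩ i

/-- `Δ(A)`: the Vandermonde product `∏_{i,j ∈ A, i<j} (λ_j − λ_i)`. -/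
def vdm {N : ℕ} (lam : Fin N → ℝ) (A : Finset (Fin N)) : ℝ :=
  ∏ p ∈ (A ×ˢ A).filter fun p => p.1 < p.2, (lam p.2 - lam p.1)

/-- `𝒫_{r,n}`: ordered `r`-tuples of pairwise disjoint `n`-element subsets of
`{1,…,rn}` whose union is everything. -/
def parts (r n : ℕ) : Finset (Fin r → Finset (Fin (r * n))) :=
  Finset.univ.filter fun A =>
    (∀ m, (A m).card = n) ∧ (∀ m m', m ≠ m' → Disjoint (A m) (A m')) ∧
      Finset.univ.biUnion A = Finset.univ

open Finset Matrix Function ComplexConjugate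
open scoped NNReal

lemma prod_mul_conj_prod_eq_prod_prod {E I J : Type*} [Fintype I] [Fintype J] [DecidableEq I]
    (z : E → ℂ) (ρ ρ' : J → I) (X : I → J → E) :
    (∏ j, z (X (ρ j) j)) * conj (∏ j, z (X (ρ' j) j))
      = ∏ i, ∏ j, (if ρ j = i then z (X i j) else 1) *
          (if ρ' j = i then conj (z (X i j)) else 1) := by
  simp only [prod_mul_distrib, map_prod]
  rw [prod_comm, prod_comm (γ := I) (f := fun i j => if ρ' j = i then _ else _)]
  simp [prod_ite_eq]

section Monomials

variable {E : Type*} [MeasurableSpace E] {μ : Measure E} [IsProbabilityMeasure μ] {z : E → ℂ}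

lemma integrable_and_integral_ite_mul_ite_conj (hz : MemLp z 2 μ) (hmean : ∫ w, z w ∂μ = 0)
    (hvar : ∫ w, ‖z w‖ ^ 2 ∂μ = 1) (P Q : Prop) [Decidable P] [Decidable Q] :
    Integrable (fun w => (if P then z w else 1) * (if Q then conj (z w) else 1)) μ ∧
      ∫ w, (if P then z w else 1) * (if Q then conj (z w) else 1) ∂μ
        = if (P ↔ Q) then 1 else 0 := by
  have hint : Integrable z μ := hz.integrable one_le_two
  by_cases hP : P <;> by_cases hQ : Q
  · simp only [hP, hQ, if_true, Complex.mul_conj', ← Complex.ofReal_pow]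
    exact ⟨(hz.integrable_norm_pow two_ne_zero).ofReal,
      by rw [integral_complex_ofReal, hvar, Complex.ofReal_one]⟩
  · simpa [hP, hQ] using ⟨hint, hmean⟩
  · have hconj : Integrable (fun w => conj (z w)) μ :=
      hint.mono hint.aestronglyMeasurable.star (by simp)
    simp only [hP, hQ, if_true, if_false, one_mul, false_iff, not_true_eq_false]
    exact ⟨hconj, by rw [integral_conj, hmean, map_zero]⟩
  · simp [hP, hQ]

theorem integrable_and_integral_prod_mul_conj_prod {I J : Type*} [Fintype I] [Fintype J]
    [DecidableEq I] (hz : MemLp z 2 μ) (hmean : ∫ w, z w ∂μ = 0) (hvar : ∫ w, ‖z w‖ ^ 2 ∂μ = 1) (ρ ρ' : J → I) :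
    Integrable (fun X : I → J → E => (∏ j, z (X (ρ j) j)) * conj (∏ j, z (X (ρ' j) j)))
        (Measure.pi fun _ => Measure.pi fun _ => μ) ∧
      ∫ X : I → J → E, (∏ j, z (X (ρ j) j)) * conj (∏ j, z (X (ρ' j) j))
        ∂(Measure.pi fun _ => Measure.pi fun _ => μ) = if ρ = ρ' then 1 else 0 := by
  set f := fun i j w => (if ρ j = i then z w else 1) * (if ρ' j = i then conj (z w) else 1)
  have hf (i : I) (j : J) :=
    integrable_and_integral_ite_mul_ite_conj hz hmean hvar (ρ j = i) (ρ' j = i)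
  simp only [prod_mul_conj_prod_eq_prod_prod]
  refine ⟨.fintype_prod fun i => .fintype_prod fun j => (hf i j).1, ?_⟩
  have hentry (i : I) (j : J) : ∫ w, f i j w ∂μ = if (ρ j = i ↔ ρ' j = i) then 1 else 0 :=
    (hf i j).2
  rw [integral_fintype_prod_eq_prod (fun i (Y : J → E) => ∏ j, f i j (Y j))]
  simp only [integral_fintype_prod_eq_prod (f _), hentry, Fintype.prod_boole]
  have hagree : (∀ i j, (ρ j = i ↔ ρ' j = i)) ↔ ρ = ρ' :=
    ⟨fun h => funext fun j => ((h (ρ j) j).mp rfl).symm, fun h => by simp [h]⟩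
  exact if_congr hagree rfl rfl

end Monomials

section ComplexGaussian

variable (v : ℝ≥0)

lemma integral_sq_gaussianReal : ∫ x, x ^ 2 ∂gaussianReal 0 v = v := by
  rw [← variance_id_gaussianReal (μ := 0) (v := v), variance_of_integral_eq_zero
    measurable_id.aemeasurable (by simp)]
  rfl

lemma memLp_re_add_im_mul_I_gaussianReal_prod :
    MemLp (fun w : ℝ × ℝ => (w.1 : ℂ) + (w.2 : ℂ) * Complex.I) 2
      ((gaussianReal 0 v).prod (gaussianReal 0 v)) := by
  have h : MemLp (fun x : ℝ => (x : ℂ)) 2 (gaussianReal 0 v) :=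
    (memLp_id_gaussianReal' 2 (by norm_num)).ofReal
  exact (h.comp_fst _).add ((h.comp_snd _).mul_const _)

lemma integral_re_add_im_mul_I_gaussianReal_prod :
    ∫ w : ℝ × ℝ, (w.1 : ℂ) + (w.2 : ℂ) * Complex.I ∂(gaussianReal 0 v).prod (gaussianReal 0 v)
      = 0 := by
  have h : Integrable (fun x : ℝ => (x : ℂ)) (gaussianReal 0 v) :=
    ((memLp_id_gaussianReal' 1 (by norm_num)).integrable le_rfl).ofReal
  rw [integral_add (h.comp_fst _) ((h.comp_snd _).mul_const _),
    integral_mul_const, integral_fun_fst (fun x : ℝ => (x : ℂ)),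
    integral_fun_snd (fun x : ℝ => (x : ℂ)), integral_complex_ofReal]
  simp

lemma integral_norm_sq_re_add_im_mul_I_gaussianReal_prod :
    ∫ w : ℝ × ℝ, ‖(w.1 : ℂ) + (w.2 : ℂ) * Complex.I‖ ^ 2 ∂(gaussianReal 0 v).prod (gaussianReal 0 v)
      = 2 * v := by
  have h : Integrable (fun x : ℝ => x ^ 2) (gaussianReal 0 v) :=
    (memLp_id_gaussianReal' 2 (by norm_num)).integrable_sq
  simp only [← Complex.normSq_eq_norm_sq, Complex.normSq_add_mul_I]
  rw [integral_add (h.comp_fst _) (h.comp_snd _), integral_fun_fst (fun x : ℝ => x ^ 2),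
    integral_fun_snd (fun x : ℝ => x ^ 2), integral_sq_gaussianReal]
  simp [two_mul]

end ComplexGaussian

lemma eq_of_mem_of_pairwise_disjoint {α ι : Type*} {A : ι → Finset α}
    (hA : Pairwise (Disjoint on A)) {a : α} {i j : ι} (hi : a ∈ A i) (hj : a ∈ A j) : i = j :=
  by_contra fun hne => disjoint_left.mp (hA hne) hi hj

section Fibers

variable {α ι : Type*} [Fintype α] [DecidableEq ι]

def fibers (ρ : α → ι) (i : ι) : Finset α := univ.filter (ρ · = i)

@[simp] lemma mem_fibers {ρ : α → ι} {i : ι} {a : α} : a ∈ fibers ρ i ↔ ρ a = i := by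
  simp [fibers]

lemma fibers_eq_iff_forall_mem {ρ : α → ι} {A : ι → Finset α} (hA : Pairwise (Disjoint on A)) :
    fibers ρ = A ↔ ∀ a, a ∈ A (ρ a) := by
  refine ⟨fun h a => h ▸ mem_fibers.mpr rfl, fun h => funext fun i => ext fun a => ?_⟩
  rw [mem_fibers]
  exact ⟨fun hi => hi ▸ h a, eq_of_mem_of_pairwise_disjoint hA (h a)⟩

lemma pairwise_disjoint_fibers (ρ : α → ι) : Pairwise (Disjoint on fibers ρ) := fun _ _ hij =>
  disjoint_left.mpr fun _ hi hj => hij ((mem_fibers.mp hi).symm.trans (mem_fibers.mp hj))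

lemma fibers_inj {ρ ρ' : α → ι} : fibers ρ = fibers ρ' ↔ ρ = ρ' := by
  rw [fibers_eq_iff_forall_mem (pairwise_disjoint_fibers ρ')]
  simp [funext_iff, eq_comm]

lemma sum_sum_mul_ite_eq_sum_sq {β R : Type*} [DecidableEq β] [CommSemiring R]
    (g : α → β) (s : Finset β) (hg : ∀ a, g a ∈ s) (c : α → R) :
    ∑ a, ∑ b, c a * c b * (if g a = g b then 1 else 0)
      = ∑ t ∈ s, (∑ a ∈ univ.filter (g · = t), c a) ^ 2 := by
  have hfiber (a : α) : ∑ b, c a * c b * (if g a = g b then 1 else 0)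
      = c a * ∑ b ∈ univ.filter (g · = g a), c b := by
    rw [sum_filter, mul_sum]
    refine sum_congr rfl fun b _ => ?_
    by_cases h : g a = g b <;> simp [h, eq_comm]
  simp_rw [hfiber]
  rw [← sum_fiberwise_of_maps_to (fun a _ => hg a)]
  refine sum_congr rfl fun t _ => ?_
  rw [sq, sum_mul]
  exact sum_congr rfl fun a ha => by rw [(mem_filter.mp ha).2]

end Fibers

section WeightedVandermonde

variable {R : Type*} [CommRing R] {r n : ℕ}

variable (r n) in
/-- Column `j` of `M(λ, X)` corresponds to `(j / r, j % r)`: it carries the power `λᵢ ^ (j / r)`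
and row `j % r` of `X`. -/
def divModEquiv : Fin n × Fin r ≃ Fin (r * n) :=
  finProdFinEquiv.trans (finCongr (Nat.mul_comm n r))

def weightedVandermonde (v : Fin (r * n) → R) (X : Matrix (Fin r) (Fin (r * n)) R) :
    Matrix (Fin (r * n)) (Fin (r * n)) R :=
  Matrix.of fun i j => v i ^ ((divModEquiv r n).symm j).1.val * X ((divModEquiv r n).symm j).2 i

lemma magicMC_eq_weightedVandermonde (hr : 0 < r) (lam : Fin (r * n) → ℝ)
    (X : Matrix (Fin r) (Fin (r * n)) ℂ) :
    MagicMC r n hr lam X = weightedVandermonde (fun i => (lam i : ℂ)) X :=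
  rfl

def permRow (p : Equiv.Perm (Fin (r * n))) (a : Fin (r * n)) : Fin r :=
  ((divModEquiv r n).symm (p a)).2

def permCoeff (v : Fin (r * n) → R) (p : Equiv.Perm (Fin (r * n))) : R :=
  (Equiv.Perm.sign p : R) * ∏ a, v a ^ ((divModEquiv r n).symm (p a)).1.val

lemma det_weightedVandermonde (v : Fin (r * n) → R) (X : Matrix (Fin r) (Fin (r * n)) R) :
    (weightedVandermonde v X).det = ∑ p, permCoeff v p * ∏ a, X (permRow p a) a := by
  rw [← det_transpose, det_apply']
  refine sum_congr rfl fun p _ => ?_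
  simp [permCoeff, permRow, weightedVandermonde, prod_mul_distrib, mul_assoc]

lemma permCoeff_ofReal (v : Fin (r * n) → ℝ) (p : Equiv.Perm (Fin (r * n))) :
    permCoeff (fun a => (v a : ℂ)) p = ((permCoeff v p : ℝ) : ℂ) := by
  simp [permCoeff]

end WeightedVandermonde

section Partitions

variable {R : Type*} [CommRing R] {r n : ℕ}

lemma mem_parts {A : Fin r → Finset (Fin (r * n))} : A ∈ parts r n ↔
    (∀ m, #(A m) = n) ∧ Pairwise (Disjoint on A) ∧ univ.biUnion A = univ := by
  simp only [parts, mem_filter, mem_univ, true_and]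
  rfl

lemma card_fibers_permRow (p : Equiv.Perm (Fin (r * n))) (m : Fin r) :
    #(fibers (permRow p) m) = n := by
  have h : #(fibers (permRow p) m) = #(univ ×ˢ {m} : Finset (Fin n × Fin r)) :=
    card_equiv (p.trans (divModEquiv r n).symm) (fun a => by simp [permRow, Prod.ext_iff, eq_comm])
  simp [h]

lemma fibers_permRow_mem_parts (p : Equiv.Perm (Fin (r * n))) : fibers (permRow p) ∈ parts r n := by
  refine mem_parts.mpr ⟨card_fibers_permRow p, pairwise_disjoint_fibers _, ?_⟩
  exact eq_univ_of_forall fun a => mem_biUnion.mpr ⟨permRow p a, mem_univ _, mem_fibers.mpr rfl⟩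

def indicatorMatrix (A : Fin r → Finset (Fin (r * n))) : Matrix (Fin r) (Fin (r * n)) R :=
  Matrix.of fun m a => if a ∈ A m then 1 else 0

lemma sum_permCoeff_fibers_eq_det {A : Fin r → Finset (Fin (r * n))}
    (hA : Pairwise (Disjoint on A)) (v : Fin (r * n) → R) :
    ∑ p ∈ univ.filter (fun p => fibers (permRow p) = A), permCoeff v p
      = (weightedVandermonde v (indicatorMatrix A)).det := by
  rw [det_weightedVandermonde, sum_filter]
  refine sum_congr rfl fun p _ => ?_
  simp only [indicatorMatrix, of_apply, prod_ite_zero, prod_const_one, mem_univ, forall_const,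
    fibers_eq_iff_forall_mem hA]
  split_ifs <;> simp

end Partitions

lemma det_submatrix_equiv_sq {ι κ R : Type*} [Fintype ι] [DecidableEq ι] [Fintype κ]
    [DecidableEq κ] [CommRing R] (e₁ e₂ : ι ≃ κ) (M : Matrix κ κ R) :
    (M.submatrix e₁ e₂).det ^ 2 = M.det ^ 2 := by
  have h : M.submatrix e₁ e₂ = (M.submatrix id (e₁.symm.trans e₂)).submatrix e₁ e₁ := by
    ext; simp
  rw [h, det_submatrix_equiv_self, det_permute', mul_pow, ← Int.cast_pow,
    ← Units.val_pow_eq_pow_val, Int.units_sq, Units.val_one, Int.cast_one, one_mul]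

lemma vdm_eq_det_vandermonde {N k : ℕ} (lam : Fin N → ℝ) (B : Finset (Fin N)) (h : #B = k) :
    vdm lam B = (vandermonde fun i => lam (B.orderEmbOfFin h i)).det := by
  set ψ := B.orderEmbOfFin h
  have hpairs : ∏ i, ∏ j ∈ Ioi i, (lam (ψ j) - lam (ψ i))
      = ∏ x ∈ univ.filter (fun x : Fin k × Fin k => x.1 < x.2), (lam (ψ x.2) - lam (ψ x.1)) := by
    rw [prod_filter, Fintype.prod_prod_type]
    exact prod_congr rfl fun i _ => by rw [← prod_filter]; congr 1; ext; simp
  rw [det_vandermonde, hpairs, vdm]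
  symm
  refine prod_nbij (Prod.map ψ ψ) (fun x hx => ?_) (ψ.injective.prodMap ψ.injective).injOn
    (fun y hy => ?_) (fun _ _ => rfl)
  · simpa [ψ, orderEmbOfFin_mem] using hx
  · simp only [coe_filter, mem_product, Set.mem_ofPred_eq] at hy
    obtain ⟨⟨i, hi⟩, ⟨j, hj⟩⟩ : y.1 ∈ Set.range ψ ∧ y.2 ∈ Set.range ψ := by
      simpa [ψ, range_orderEmbOfFin] using hy.1
    exact ⟨(i, j), by simpa [← hi, ← hj] using hy.2, by simp [hi, hj]⟩

section BlockDiagonal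

variable {R : Type*} [CommRing R] {r n : ℕ} {A : Fin r → Finset (Fin (r * n))}

noncomputable def partsEquiv (hA : A ∈ parts r n) : Fin n × Fin r ≃ Fin (r * n) :=
  Equiv.ofBijective (fun x => (A x.2).orderEmbOfFin ((mem_parts.mp hA).1 x.2) x.1) <| by
    refine (Fintype.bijective_iff_injective_and_card _).mpr ⟨?_, by simp [mul_comm]⟩
    rintro ⟨k, m⟩ ⟨k', m'⟩ h
    simp only at h
    obtain rfl : m = m' := eq_of_mem_of_pairwise_disjoint (mem_parts.mp hA).2.1
      (orderEmbOfFin_mem _ _ k) (h ▸ orderEmbOfFin_mem _ _ k')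
    simpa using h

lemma submatrix_partsEquiv_divModEquiv (hA : A ∈ parts r n) (v : Fin (r * n) → R) :
    (weightedVandermonde v (indicatorMatrix A)).submatrix (partsEquiv hA) (divModEquiv r n)
      = blockDiagonal fun m =>
          vandermonde fun k => v ((A m).orderEmbOfFin ((mem_parts.mp hA).1 m) k) := by
  ext ⟨k, m⟩ ⟨k', m'⟩
  have hmem : (A m).orderEmbOfFin ((mem_parts.mp hA).1 m) k ∈ A m' ↔ m = m' :=
    ⟨eq_of_mem_of_pairwise_disjoint (mem_parts.mp hA).2.1 (orderEmbOfFin_mem _ _ k),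
      fun h => h ▸ orderEmbOfFin_mem _ _ k⟩
  simp [weightedVandermonde, indicatorMatrix, partsEquiv, blockDiagonal_apply, hmem]

lemma det_weightedVandermonde_indicatorMatrix_sq (hA : A ∈ parts r n) (v : Fin (r * n) → R) :
    (weightedVandermonde v (indicatorMatrix A)).det ^ 2
      = ∏ m, (vandermonde fun k => v ((A m).orderEmbOfFin ((mem_parts.mp hA).1 m) k)).det ^ 2 := by
  rw [← det_submatrix_equiv_sq (partsEquiv hA) (divModEquiv r n), submatrix_partsEquiv_divModEquiv,
    det_blockDiagonal, prod_pow]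

end BlockDiagonal

section SecondMoment

variable {E : Type*} [MeasurableSpace E] {μ : Measure E} [IsProbabilityMeasure μ] {z : E → ℂ}
  {r n : ℕ}

theorem integral_norm_sq_det_weightedVandermonde (hz : MemLp z 2 μ) (hmean : ∫ w, z w ∂μ = 0)
    (hvar : ∫ w, ‖z w‖ ^ 2 ∂μ = 1) (lam : Fin (r * n) → ℝ) :
    ∫ X : Fin r → Fin (r * n) → E,
        ‖(weightedVandermonde (fun i => (lam i : ℂ)) (Matrix.of fun m a => z (X m a))).det‖ ^ 2
        ∂(Measure.pi fun _ => Measure.pi fun _ => μ)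
      = ∑ p, ∑ q, permCoeff lam p * permCoeff lam q * (if permRow p = permRow q then 1 else 0) := by
  have hmono (p q : Equiv.Perm (Fin (r * n))) :=
    integrable_and_integral_prod_mul_conj_prod hz hmean hvar (permRow p) (permRow q)
  have hexpand (X : Fin r → Fin (r * n) → E) :
      ((‖(weightedVandermonde (fun i => (lam i : ℂ)) (Matrix.of fun m a => z (X m a))).det‖ ^ 2
        : ℝ) : ℂ)
      = ∑ p, ∑ q, ((permCoeff lam p * permCoeff lam q : ℝ) : ℂ) *
          ((∏ a, z (X (permRow p a) a)) * conj (∏ a, z (X (permRow q a) a))) := by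
    rw [Complex.ofReal_pow, ← Complex.mul_conj', det_weightedVandermonde, map_sum, sum_mul_sum]
    refine sum_congr rfl fun p _ => sum_congr rfl fun q _ => ?_
    simp only [permCoeff_ofReal, map_mul, Complex.conj_ofReal, of_apply, Complex.ofReal_mul]
    ring
  rw [← Complex.ofReal_inj, ← integral_complex_ofReal]
  simp_rw [hexpand]
  rw [integral_finsetSum _ fun p _ => integrable_finsetSum _ fun q _ => (hmono p q).1.const_mul _]
  push_cast
  refine sum_congr rfl fun p _ => ?_
  rw [integral_finsetSum _ fun q _ => (hmono p q).1.const_mul _]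
  refine sum_congr rfl fun q _ => ?_
  rw [integral_const_mul, (hmono p q).2]
  split_ifs <;> simp

theorem integral_norm_sq_det_magicMC (hz : MemLp z 2 μ) (hmean : ∫ w, z w ∂μ = 0)
    (hvar : ∫ w, ‖z w‖ ^ 2 ∂μ = 1) (hr : 0 < r) (lam : Fin (r * n) → ℝ) :
    ∫ X : Fin r → Fin (r * n) → E,
        ‖(MagicMC r n hr lam (Matrix.of fun m a => z (X m a))).det‖ ^ 2
        ∂(Measure.pi fun _ => Measure.pi fun _ => μ)
      = ∑ A ∈ parts r n, ∏ j : Fin r, vdm lam (A j) ^ 2 := by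
  simp only [magicMC_eq_weightedVandermonde]
  calc _ = ∑ p, ∑ q, permCoeff lam p * permCoeff lam q *
          (if permRow p = permRow q then 1 else 0) :=
        integral_norm_sq_det_weightedVandermonde hz hmean hvar lam
    _ = ∑ p, ∑ q, permCoeff lam p * permCoeff lam q *
          (if fibers (permRow p) = fibers (permRow q) then 1 else 0) := by
        simp only [fibers_inj]
    _ = ∑ A ∈ parts r n,
          (∑ p ∈ univ.filter (fun p => fibers (permRow p) = A), permCoeff lam p) ^ 2 :=
        sum_sum_mul_ite_eq_sum_sq _ _ fibers_permRow_mem_parts _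
    _ = _ := sum_congr rfl fun A hA => by
        rw [sum_permCoeff_fibers_eq_det (mem_parts.mp hA).2.1,
          det_weightedVandermonde_indicatorMatrix_sq hA]
        exact prod_congr rfl fun m _ => by
          rw [vdm_eq_det_vandermonde lam (A m) ((mem_parts.mp hA).1 m)]

end SecondMoment

theorem statement3_general (r n : ℕ) (hr : 0 < r) (lam : Fin (r * n) → ℝ) :
    (∫ X : Fin r → Fin (r * n) → ℝ × ℝ,
        Norm.norm
            ((MagicMC r n hr lam
                (Matrix.of fun m a => ((X m a).1 : ℂ) + ((X m a).2 : ℂ) * Complex.I)).det)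
          ^ 2
        ∂(Measure.pi fun _ : Fin r => Measure.pi fun _ : Fin (r * n) =>
            (gaussianReal 0 (1/2)).prod (gaussianReal 0 (1/2)))) =
      ∑ A ∈ parts r n, ∏ j : Fin r, vdm lam (A j) ^ 2 :=
  integral_norm_sq_det_magicMC (memLp_re_add_im_mul_I_gaussianReal_prod _)
    (integral_re_add_im_mul_I_gaussianReal_prod _)
    (by rw [integral_norm_sq_re_add_im_mul_I_gaussianReal_prod]; norm_num) hr lam

/-- Each entry of the random matrix is `g + i·h` with `g, h` independent real Gaussians
of mean `0` and variance `1/2`, all entries independent: the matrix of pairs `(g,h)` is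
distributed according to the product over all entries of `N(0,1/2) ⊗ N(0,1/2)`. -/
theorem statement3 (r n : ℕ) (hr : 0 < r) (hn : 0 < n) (lam : Fin (r * n) → ℝ) :
    (∫ X : Fin r → Fin (r * n) → ℝ × ℝ,
        Norm.norm
            ((MagicMC r n hr lam
                (Matrix.of fun m a => ((X m a).1 : ℂ) + ((X m a).2 : ℂ) * Complex.I)).det)
          ^ 2
        ∂(Measure.pi fun _ : Fin r => Measure.pi fun _ : Fin (r * n) =>
            (gaussianReal 0 (1/2)).prod (gaussianReal 0 (1/2)))) =
      ∑ A ∈ parts r n, ∏ j : Fin r, vdm lam (A j) ^ 2 :=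
  statement3_general r n hr lam
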